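/- arXiv:2502.02989 — 2 statements merged into one kernel-verified Lean document; each statement's English description precedes it below -/
import Mathlib

section
/- Let Ω ⊂ ℝⁿ be a bounded domain whose boundary ∂Ω is Minkowski nondegenerate of dimension d ∈ (n−1, n) relative to Ω, i.e., 0 < liminf_{r→0} μ(∂Ω, r)/r^{n-d} ≤ limsup_{r→0} μ(∂Ω, r)/r^{n-d} < ∞. Suppose the heat content N(t) satisfies c₁ μ(∂Ω, c₂√t) ≤ N(t) ≤ c₃ t^{-1} ∫₀^∞ e^{-r²/(8t)} r μ(∂Ω, r) dr for all t > 0, with positive constants c₁, c₂, c₃. Then there exist constants c > 0 and t₀ > 0 such that c^{-1} t^{(n-d)/2} ≤ N(t) ≤ c t^{(n-d)/2} for all 0 < t ≤ t₀. -/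
open MeasureTheory Metric Filter

/-- Interior Minkowski sausage volume of a domain. -/
noncomputable def sausage {n : ℕ} (Ω : Set (EuclideanSpace ℝ (Fin n))) (r : ℝ) : ℝ :=
  (volume {x | x ∈ Ω ∧ infDist x (frontier Ω) < r}).toReal

/-!
Minkowski nondegeneracy gives `a r^(n-d) ≤ μ(∂Ω, r)` for small `r`, and together with
`μ(∂Ω, r) ≤ |Ω|` it gives `μ(∂Ω, r) ≤ B r^(n-d)` for all `r > 0`. Inserting the first bound
at `r = c₂√t` into the lower bound on `N` gives `N(t) ≳ t^((n-d)/2)`; inserting the second into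
the upper bound turns it into a Gaussian moment `∫₀^∞ e^(-r²/8t) r^(1+n-d) dr ∝ t^((n-d)/2 + 1)`.
-/

open Real Set Topology

theorem sausage_nonneg {n : ℕ} (Ω : Set (EuclideanSpace ℝ (Fin n))) (r : ℝ) :
    0 ≤ sausage Ω r :=
  ENNReal.toReal_nonneg

theorem sausage_le_volume {n : ℕ} {Ω : Set (EuclideanSpace ℝ (Fin n))}
    (hΩ : Bornology.IsBounded Ω) (r : ℝ) : sausage Ω r ≤ (volume Ω).toReal :=
  ENNReal.toReal_mono hΩ.measure_lt_top.ne (measure_mono fun _ hx => hx.1)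

section PowerLaw

variable {f : ℝ → ℝ} {α : ℝ}

theorem exists_mul_rpow_le_of_liminf_pos (hf : 0 ≤ f)
    (h : 0 < liminf (fun r => f r / r ^ α) (𝓝[>] 0)) :
    ∃ a, 0 < a ∧ ∀ᶠ r in 𝓝[>] 0, a * r ^ α ≤ f r := by
  set L := liminf (fun r => f r / r ^ α) (𝓝[>] 0)
  have hbdd : IsBoundedUnder (· ≥ ·) (𝓝[>] (0 : ℝ)) (fun r => f r / r ^ α) := by
    refine ⟨0, eventually_map.mpr ?_⟩
    filter_upwards [self_mem_nhdsWithin] with r hr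
    exact div_nonneg (hf r) (rpow_pos_of_pos hr α).le
  refine ⟨L / 2, half_pos h, ?_⟩
  filter_upwards [eventually_lt_of_lt_liminf (half_lt_self h) hbdd, self_mem_nhdsWithin]
    with r hLr hr
  exact (le_div_iff₀ (rpow_pos_of_pos hr α)).mp hLr.le

theorem exists_le_mul_rpow_of_isBoundedUnder {V : ℝ} (hα : 0 ≤ α) (hV : 0 ≤ V)
    (hfV : ∀ r, f r ≤ V) (h : IsBoundedUnder (· ≤ ·) (𝓝[>] 0) (fun r => f r / r ^ α)) :
    ∃ B, ∀ r, 0 < r → f r ≤ B * r ^ α := by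
  obtain ⟨b, hb⟩ := h
  obtain ⟨r₀, hr₀, hsub⟩ := mem_nhdsGT_iff_exists_Ioo_subset.mp (eventually_map.mp hb)
  have hr₀α : 0 < r₀ ^ α := rpow_pos_of_pos hr₀ α
  refine ⟨max b (V / r₀ ^ α), fun r hr => ?_⟩
  have hrα : 0 < r ^ α := rpow_pos_of_pos hr α
  rcases lt_or_ge r r₀ with hrr₀ | hr₀r
  · calc f r ≤ b * r ^ α := (div_le_iff₀ hrα).mp (hsub ⟨hr, hrr₀⟩)
      _ ≤ _ := by gcongr; exact le_max_left _ _
  · calc f r ≤ V / r₀ ^ α * r₀ ^ α := by rw [div_mul_cancel₀ _ hr₀α.ne']; exact hfV r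
      _ ≤ V / r₀ ^ α * r ^ α := by gcongr; exact le_of_lt hr₀
      _ ≤ _ := by gcongr; exact le_max_right _ _

/-- Comparison with the Gaussian moment `∫₀^∞ r^(α+1) e^(-r²/s) dr = Γ((α+2)/2) s^((α+2)/2) / 2`. -/
theorem integral_exp_neg_sq_div_mul_le {s B : ℝ} (hs : 0 < s) (hα : -2 < α)
    (hf : 0 ≤ f) (hfB : ∀ r, 0 < r → f r ≤ B * r ^ α) :
    ∫ r in Ioi 0, exp (-(r ^ 2) / s) * r * f r ≤
      B * (Gamma ((α + 2) / 2) / 2) * s ^ ((α + 2) / 2) := by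
  have hs' : 0 < s⁻¹ := inv_pos.mpr hs
  have hpoint : ∀ r ∈ Ioi (0 : ℝ), exp (-(r ^ 2) / s) * r * f r ≤
      B * (r ^ (1 + α) * exp (-s⁻¹ * r ^ (2 : ℝ))) := by
    intro r (hr : 0 < r)
    have hexp : -(r ^ 2) / s = -s⁻¹ * r ^ (2 : ℝ) := by rw [rpow_two]; ring
    calc exp (-(r ^ 2) / s) * r * f r ≤ exp (-(r ^ 2) / s) * r * (B * r ^ α) := by
          gcongr; exact hfB r hr
      _ = _ := by rw [hexp, rpow_add hr, rpow_one]; ring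
  calc ∫ r in Ioi 0, exp (-(r ^ 2) / s) * r * f r
      ≤ ∫ r in Ioi 0, B * (r ^ (1 + α) * exp (-s⁻¹ * r ^ (2 : ℝ))) := by
        refine integral_mono_of_nonneg ?_ ?_ ((ae_restrict_iff' measurableSet_Ioi).mpr
          (ae_of_all _ hpoint))
        · exact (ae_restrict_iff' measurableSet_Ioi).mpr (ae_of_all _ fun r (hr : 0 < r) =>
            mul_nonneg (mul_nonneg (exp_pos _).le hr.le) (hf r))
        · exact (integrableOn_rpow_mul_exp_neg_mul_rpow (by linarith) two_pos hs').const_mul B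
    _ = B * (Gamma ((α + 2) / 2) / 2) * s ^ ((α + 2) / 2) := by
        rw [integral_const_mul, integral_rpow_mul_exp_neg_mul_rpow two_pos (by linarith) hs',
          show -(1 + α + 1) / 2 = -((α + 2) / 2) by ring, show (1 + α + 1) / 2 = (α + 2) / 2 by ring,
          inv_rpow hs.le, rpow_neg hs.le, inv_inv]
        ring

end PowerLaw

theorem exists_two_sided_rpow_bound {N : ℝ → ℝ} {β A C : ℝ} (hA : 0 < A)
    (hlow : ∀ᶠ t in 𝓝[>] 0, A * t ^ β ≤ N t) (hup : ∀ᶠ t in 𝓝[>] 0, N t ≤ C * t ^ β) :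
    ∃ c : ℝ, 0 < c ∧ ∃ t₀ : ℝ, 0 < t₀ ∧ ∀ t : ℝ, 0 < t → t ≤ t₀ →
      c⁻¹ * t ^ β ≤ N t ∧ N t ≤ c * t ^ β := by
  obtain ⟨t₀, ht₀, hsub⟩ := mem_nhdsGT_iff_exists_Ioc_subset.mp (hlow.and hup)
  have hc : 0 < max A⁻¹ C := lt_max_of_lt_left (inv_pos.mpr hA)
  refine ⟨max A⁻¹ C, hc, t₀, ht₀, fun t ht htt₀ => ?_⟩
  obtain ⟨hAN, hNC⟩ := hsub ⟨ht, htt₀⟩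
  have htβ : 0 ≤ t ^ β := rpow_nonneg ht.le β
  have hcA : (max A⁻¹ C)⁻¹ ≤ A := (inv_le_comm₀ hc hA).mpr (le_max_left _ _)
  exact ⟨(mul_le_mul_of_nonneg_right hcA htβ).trans hAN,
    hNC.trans (mul_le_mul_of_nonneg_right (le_max_right _ _) htβ)⟩

theorem mul_sqrt_rpow {c t : ℝ} (hc : 0 ≤ c) (ht : 0 ≤ t) (α : ℝ) :
    (c * √t) ^ α = c ^ α * t ^ (α / 2) := by
  rw [mul_rpow hc (sqrt_nonneg t), sqrt_eq_rpow, ← rpow_mul ht, one_div_mul_eq_div]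

theorem tendsto_const_mul_sqrt_nhdsGT {c : ℝ} (hc : 0 < c) :
    Tendsto (fun t => c * √t) (𝓝[>] 0) (𝓝[>] 0) := by
  refine tendsto_nhdsWithin_of_tendsto_nhds_of_eventually_within _ ?_ ?_
  · simpa using ((continuous_sqrt.tendsto 0).const_mul c).mono_left nhdsWithin_le_nhds
  · filter_upwards [self_mem_nhdsWithin] with t (ht : 0 < t)
    exact mul_pos hc (sqrt_pos.mpr ht)

theorem heat_content_power_law_general {n : ℕ}
    (Ω : Set (EuclideanSpace ℝ (Fin n))) (hΩbdd : Bornology.IsBounded Ω)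
    (d : ℝ) (hd₂ : d < n)
    -- Minkowski nondegeneracy: 0 < liminf ≤ limsup < ∞
    (hliminf : 0 < liminf (fun r : ℝ => sausage Ω r / r ^ ((n : ℝ) - d))
      (nhdsWithin 0 (Set.Ioi 0)))
    (hlimsup : IsBoundedUnder (· ≤ ·) (nhdsWithin 0 (Set.Ioi 0))
      (fun r : ℝ => sausage Ω r / r ^ ((n : ℝ) - d)))
    (N : ℝ → ℝ) (c₁ c₂ c₃ : ℝ) (hc₁ : 0 < c₁) (hc₂ : 0 < c₂) (hc₃ : 0 < c₃)
    (hlow : ∀ t : ℝ, 0 < t → c₁ * sausage Ω (c₂ * Real.sqrt t) ≤ N t)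
    (hup : ∀ t : ℝ, 0 < t → N t ≤
      c₃ * t⁻¹ * ∫ r in Set.Ioi (0 : ℝ), Real.exp (-(r ^ 2) / (8 * t)) * r * sausage Ω r) :
    ∃ c : ℝ, 0 < c ∧ ∃ t₀ : ℝ, 0 < t₀ ∧ ∀ t : ℝ, 0 < t → t ≤ t₀ →
      c⁻¹ * t ^ (((n : ℝ) - d) / 2) ≤ N t ∧ N t ≤ c * t ^ (((n : ℝ) - d) / 2) := by
  set α : ℝ := (n : ℝ) - d
  have hα : 0 < α := sub_pos.mpr hd₂
  obtain ⟨a, ha, hsa⟩ := exists_mul_rpow_le_of_liminf_pos (sausage_nonneg Ω) hliminf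
  obtain ⟨B, hsB⟩ := exists_le_mul_rpow_of_isBoundedUnder hα.le ENNReal.toReal_nonneg
    (sausage_le_volume hΩbdd) hlimsup
  refine exists_two_sided_rpow_bound (A := c₁ * a * c₂ ^ α)
    (C := c₃ * B * (Gamma ((α + 2) / 2) / 2) * 8 ^ ((α + 2) / 2)) (by positivity) ?_ ?_
  · filter_upwards [(tendsto_const_mul_sqrt_nhdsGT hc₂).eventually hsa, self_mem_nhdsWithin]
      with t hat (ht : 0 < t)
    calc c₁ * a * c₂ ^ α * t ^ (α / 2) = c₁ * (a * (c₂ * √t) ^ α) := by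
          rw [mul_sqrt_rpow hc₂.le ht.le]; ring
      _ ≤ c₁ * sausage Ω (c₂ * √t) := by gcongr
      _ ≤ N t := hlow t ht
  · filter_upwards [self_mem_nhdsWithin] with t (ht : 0 < t)
    calc N t ≤ c₃ * t⁻¹ * ∫ r in Ioi 0, exp (-(r ^ 2) / (8 * t)) * r * sausage Ω r := hup t ht
      _ ≤ c₃ * t⁻¹ * (B * (Gamma ((α + 2) / 2) / 2) * (8 * t) ^ ((α + 2) / 2)) := by
          gcongr
          exact integral_exp_neg_sq_div_mul_le (by positivity) (by linarith) (sausage_nonneg Ω) hsB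
      _ = c₃ * B * (Gamma ((α + 2) / 2) / 2) * 8 ^ ((α + 2) / 2) * t ^ (α / 2) := by
          rw [mul_rpow (by norm_num) ht.le, show (α + 2) / 2 = α / 2 + 1 by ring,
            rpow_add_one ht.ne']
          field_simp

/-- if ∂Ω is Minkowski nondegenerate of dimension d ∈ (n−1, n) relative
to Ω, and the heat content N(t) satisfies the two-sided integral bounds
c₁ μ(∂Ω, c₂√t) ≤ N(t) ≤ c₃ t⁻¹ ∫₀^∞ e^{−r²/(8t)} r μ(∂Ω, r) dr, then
c⁻¹ t^{(n−d)/2} ≤ N(t) ≤ c t^{(n−d)/2} for small t. -/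
theorem heat_content_power_law {n : ℕ}
    (Ω : Set (EuclideanSpace ℝ (Fin n))) (hΩopen : IsOpen Ω)
    (hΩconn : IsConnected Ω) (hΩbdd : Bornology.IsBounded Ω)
    (d : ℝ) (hd₁ : (n : ℝ) - 1 < d) (hd₂ : d < n)
    -- Minkowski nondegeneracy: 0 < liminf ≤ limsup < ∞
    (hliminf : 0 < liminf (fun r : ℝ => sausage Ω r / r ^ ((n : ℝ) - d))
      (nhdsWithin 0 (Set.Ioi 0)))
    (hlimsup : IsBoundedUnder (· ≤ ·) (nhdsWithin 0 (Set.Ioi 0))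
      (fun r : ℝ => sausage Ω r / r ^ ((n : ℝ) - d)))
    (N : ℝ → ℝ) (c₁ c₂ c₃ : ℝ) (hc₁ : 0 < c₁) (hc₂ : 0 < c₂) (hc₃ : 0 < c₃)
    (hlow : ∀ t : ℝ, 0 < t → c₁ * sausage Ω (c₂ * Real.sqrt t) ≤ N t)
    (hup : ∀ t : ℝ, 0 < t → N t ≤
      c₃ * t⁻¹ * ∫ r in Set.Ioi (0 : ℝ), Real.exp (-(r ^ 2) / (8 * t)) * r * sausage Ω r) :
    ∃ c : ℝ, 0 < c ∧ ∃ t₀ : ℝ, 0 < t₀ ∧ ∀ t : ℝ, 0 < t → t ≤ t₀ →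
      c⁻¹ * t ^ (((n : ℝ) - d) / 2) ≤ N t ∧ N t ≤ c * t ^ (((n : ℝ) - d) / 2) :=
  heat_content_power_law_general Ω hΩbdd d hd₂ hliminf hlimsup N c₁ c₂ c₃ hc₁ hc₂ hc₃ hlow hup
end

section
/- Let Ω ⊂ ℝⁿ be open and bounded with ∂Ω = ⋃_{j=1}^M F^{(j)} (closed sets), and let U^{(1)}, …, U^{(M)} ⊂ Ω be pairwise disjoint open sets with U^{(j)} ⊆ closure(π_{∂Ω}^{-1}(F^{(j)})), where π_{∂Ω} is the metric projection onto ∂Ω. Then for every ε > 0 and every j, (∂Ω)(ε) ∩ U^{(j)} = F^{(j)}(ε) ∩ U^{(j)}, where E(ε) denotes the closed ε-parallel set of E. -/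
/-! At a point whose nearest point in `∂Ω` lies in `F⁽ʲ⁾`, the distance to `F⁽ʲ⁾` is at most the
distance to `∂Ω`. This inequality between continuous functions survives passage to the closure,
and the reverse one holds because `F⁽ʲ⁾ ⊆ ∂Ω`; so the two distance functions, and hence the two
parallel sets, agree on `U⁽ʲ⁾`. -/

open MeasureTheory Metric

/-- The preimage under the metric projection onto B of a subset B' ⊆ B: the set of
points with a unique nearest point in B, whose nearest point belongs to B'. -/
def projPreimage {n : ℕ} (B B' : Set (EuclideanSpace ℝ (Fin n))) :
    Set (EuclideanSpace ℝ (Fin n)) :=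
  {x | (∃! y, y ∈ B ∧ dist x y = infDist x B) ∧
       ∀ y, y ∈ B → dist x y = infDist x B → y ∈ B'}

section projPreimage

variable {n : ℕ} {B B' : Set (EuclideanSpace ℝ (Fin n))} {x : EuclideanSpace ℝ (Fin n)}

theorem infEDist_le_of_mem_projPreimage (hx : x ∈ projPreimage B B') :
    infEDist x B' ≤ infEDist x B := by
  obtain ⟨⟨y, ⟨hyB, hyd⟩, -⟩, hnearest⟩ := hx
  calc infEDist x B' ≤ edist x y := infEDist_le_edist_of_mem (hnearest y hyB hyd)
    _ = ENNReal.ofReal (infDist x B) := by rw [edist_dist, hyd]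
    _ = infEDist x B := ENNReal.ofReal_toReal (infEDist_ne_top ⟨y, hyB⟩)

theorem infEDist_le_of_mem_closure_projPreimage (hx : x ∈ closure (projPreimage B B')) :
    infEDist x B' ≤ infEDist x B :=
  closure_minimal (fun _ ↦ infEDist_le_of_mem_projPreimage)
    (isClosed_le continuous_infEDist continuous_infEDist) hx

theorem cthickening_inter_eq_of_subset_closure_projPreimage
    {U : Set (EuclideanSpace ℝ (Fin n))} (hB' : B' ⊆ B)
    (hU : U ⊆ closure (projPreimage B B')) (δ : ℝ) :
    cthickening δ B ∩ U = cthickening δ B' ∩ U := by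
  ext x
  refine and_congr_left fun hxU ↦ ?_
  have hdist : infEDist x B = infEDist x B' :=
    le_antisymm (infEDist_anti hB') (infEDist_le_of_mem_closure_projPreimage (hU hxU))
  rw [mem_cthickening_iff, mem_cthickening_iff, hdist]

end projPreimage

theorem parallel_sets_in_Uj_general {n M : ℕ}
    (Ω : Set (EuclideanSpace ℝ (Fin n)))
    (F : Fin M → Set (EuclideanSpace ℝ (Fin n)))
    (hbd : frontier Ω = ⋃ j, F j)
    (U : Fin M → Set (EuclideanSpace ℝ (Fin n)))
    (hUproj : ∀ j, U j ⊆ closure (projPreimage (frontier Ω) (F j))) :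
    ∀ ε : ℝ, 0 < ε → ∀ j,
      cthickening ε (frontier Ω) ∩ U j = cthickening ε (F j) ∩ U j := fun ε _ j ↦
  cthickening_inter_eq_of_subset_closure_projPreimage (hbd ▸ Set.subset_iUnion F j)
    (hUproj j) ε

/-- if ∂Ω = ⋃ⱼ F⁽ʲ⁾ with F⁽ʲ⁾ closed, and U⁽ʲ⁾ ⊆ Ω are pairwise
disjoint open sets with U⁽ʲ⁾ ⊆ cl(π_{∂Ω}⁻¹(F⁽ʲ⁾)), then inside U⁽ʲ⁾ the parallel
sets of ∂Ω and of the piece F⁽ʲ⁾ coincide: (∂Ω)(ε) ∩ U⁽ʲ⁾ = F⁽ʲ⁾(ε) ∩ U⁽ʲ⁾. -/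
theorem parallel_sets_in_Uj {n M : ℕ} (hM : 0 < M)
    (Ω : Set (EuclideanSpace ℝ (Fin n))) (hΩopen : IsOpen Ω)
    (hΩbdd : Bornology.IsBounded Ω)
    (F : Fin M → Set (EuclideanSpace ℝ (Fin n)))
    (hFclosed : ∀ j, IsClosed (F j))
    (hbd : frontier Ω = ⋃ j, F j)
    (U : Fin M → Set (EuclideanSpace ℝ (Fin n)))
    (hUopen : ∀ j, IsOpen (U j)) (hUsub : ∀ j, U j ⊆ Ω)
    (hUdisj : ∀ j j', j ≠ j' → Disjoint (U j) (U j'))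
    (hUproj : ∀ j, U j ⊆ closure (projPreimage (frontier Ω) (F j))) :
    ∀ ε : ℝ, 0 < ε → ∀ j,
      cthickening ε (frontier Ω) ∩ U j = cthickening ε (F j) ∩ U j :=
  parallel_sets_in_Uj_general Ω F hbd U hUproj
end
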